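/- Fix a winner number k with 1 ≤ k ≤ n, a Gini cap g ∈ (0,1), an agent i, and the other agents' budgets b_{−i}. Then the ratio b_i / p*_k(b_i, b_{−i}) is nondecreasing in b_i (on the domain where p*_k is defined). Consequently, for any finite set K of allowed winner numbers, b_i / p*(b_i, b_{−i}) with p*(b) = max_{k∈K} p*_k(b) is also nondecreasing in b_i. -/

import Mathlib

open Finset

/-- The ascending rearrangement of a vector. -/
noncomputable def sortedAsc {n : ℕ} (a : Fin n → ℝ) : Fin n → ℝ :=
  a ∘ Tuple.sort a

/-- The Gini index of an ascending-sorted nonnegative vector `y` on `Fin k`: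
`2 (∑ i, i * y_i) / (k ∑ i, y_i) - (k+1)/k` (with 1-based weights). -/
noncomputable def gini {k : ℕ} (y : Fin k → ℝ) : ℝ :=
  2 * (∑ i : Fin k, (((i : ℕ) : ℝ) + 1) * y i) / (k * ∑ i, y i) - ((k : ℝ) + 1) / k

/-- The flexible Gini index with winner number `k`: the Gini index of the top `k`
entries of the ascending rearrangement of the allocation. -/
noncomputable def flexGini {n : ℕ} (k : ℕ) (a : Fin n → ℝ) : ℝ :=
  if h : k ≤ n then
    gini (fun i : Fin k => sortedAsc a ⟨n - k + i, by have := i.isLt; omega⟩)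
  else 0

/-- Feasibility of allocation `a` for budgets `b`, winner number `k`, price `p`. -/
def Feasible {n : ℕ} (b : Fin n → ℝ) (k : ℕ) (p : ℝ) (a : Fin n → ℝ) : Prop :=
  (∀ i, 0 ≤ a i) ∧ (∑ i, a i = 1) ∧ (∀ i, a i * p ≤ b i) ∧
    n - k ≤ (Finset.univ.filter fun i => a i = 0).card

open Classical in
/-- The minimum flexible Gini index over feasible allocations (`1` if none exists). -/
noncomputable def gStar {n : ℕ} (b : Fin n → ℝ) (k : ℕ) (p : ℝ) : ℝ :=
  if ∃ a, Feasible b k p a then sInf (flexGini k '' {a | Feasible b k p a}) else 1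

/-- The maximum price for winner number `k` under Gini cap `g`. -/
noncomputable def pStar {n : ℕ} (b : Fin n → ℝ) (k : ℕ) (g : ℝ) : ℝ :=
  sSup {p : ℝ | 0 < p ∧ gStar b k p ≤ g}

/-- The Gini mechanism's price: the maximum of `pStar` over allowed winner numbers. -/
noncomputable def pStarK {n : ℕ} (b : Fin n → ℝ) (K : Finset ℕ) (g : ℝ) : ℝ :=
  sSup ((fun k => pStar b k g) '' (K : Set ℕ))

/-- The `(m+1)`-st smallest budget (0-based index `m`). -/
noncomputable def nthSmallest {n : ℕ} (b : Fin n → ℝ) (m : ℕ) : ℝ :=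
  if h : m < n then sortedAsc b ⟨m, h⟩ else 0

/-- The allocation cap `C` at price `p` for winner number `k`. -/
noncomputable def capOf {n : ℕ} (b : Fin n → ℝ) (k : ℕ) (p : ℝ) : ℝ :=
  sInf {C : ℝ | 0 < C ∧
    1 ≤ ∑ i ∈ Finset.univ.filter (fun i : Fin n => n - k ≤ (i : ℕ)),
        min (sortedAsc b i / p) C}

/-- The winner number chosen by the Gini mechanism (ties broken in favor of more winners). -/
noncomputable def mechWinnerNum {n : ℕ} (b : Fin n → ℝ) (K : Finset ℕ) (g : ℝ) : ℕ :=
  sSup {k | k ∈ K ∧ pStar b k g = pStarK b K g}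

/-- The allocation of the Gini mechanism: agents in the bottom `n - k` positions (by budget)
receive `0`; the `k` winners receive `min (bᵢ/p, C)` at the mechanism price `p`. -/
noncomputable def mechAlloc {n : ℕ} (b : Fin n → ℝ) (K : Finset ℕ) (g : ℝ) : Fin n → ℝ :=
  fun i =>
    if ((Tuple.sort b).symm i : ℕ) < n - mechWinnerNum b K g then 0
    else min (b i / pStarK b K g) (capOf b (mechWinnerNum b K g) (pStarK b K g))

/-- Agent `i`'s spending under the Gini mechanism. -/
noncomputable def spend {n : ℕ} (b : Fin n → ℝ) (K : Finset ℕ) (g : ℝ) (i : Fin n) : ℝ :=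
  mechAlloc b K g i * pStarK b K g

/-- Agent `i`'s utility under the Gini mechanism when her valuation is `v`. -/
noncomputable def util {n : ℕ} (b : Fin n → ℝ) (K : Finset ℕ) (g : ℝ) (i : Fin n) (v : ℝ) : ℝ :=
  mechAlloc b K g i * (v - pStarK b K g)

/-!
Lowering agent `i`'s budget from `y` to `x` leaves every budget at least `x / y` times its old
value, and an allocation that is feasible for budgets `b` at price `p` stays feasible, with the
same flexible Gini index, for any budgets above `c • b` at price `c * p`. Hence every admissible
price at `y` gives the admissible price `(x / y) * p` at `x`, so `(x / y) * p*_k(y) ≤ p*_k(x)`,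
which is the monotonicity of `bᵢ / p*_k`; the inequality survives the maximum over `k ∈ K`.
-/

section EqualShare

variable {n : ℕ}

noncomputable def topShare (n k : ℕ) : Fin n → ℝ :=
  fun m => if (m : ℕ) < n - k then 0 else (k : ℝ)⁻¹

/-- Equal shares `1/k` for the `k` agents with the largest budgets, `0` for the others. -/
noncomputable def equalShare (b : Fin n → ℝ) (k : ℕ) : Fin n → ℝ :=
  topShare n k ∘ (Tuple.sort b).symm

lemma topShare_monotone (n k : ℕ) : Monotone (topShare n k) := by
  intro m m' h
  have h' : (m : ℕ) ≤ m' := h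
  unfold topShare
  split_ifs <;> first | rfl | positivity | omega

lemma sum_topShare {k : ℕ} (hk1 : 1 ≤ k) (hk2 : k ≤ n) : ∑ m, topShare n k m = 1 := by
  have hcard : #{m : Fin n | ¬ (m : ℕ) < n - k} = k := by
    have := Finset.card_filter_add_card_filter_not
      (s := (Finset.univ : Finset (Fin n))) (fun m : Fin n => (m : ℕ) < n - k)
    rw [Fin.card_filter_val_lt, Finset.card_univ, Fintype.card_fin] at this
    omega
  simp only [topShare, Finset.sum_ite, Finset.sum_const_zero, Finset.sum_const, hcard,
    nsmul_eq_mul, zero_add]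
  exact mul_inv_cancel₀ (by positivity)

lemma card_topShare_eq_zero (n k : ℕ) : n - k ≤ #{m | topShare n k m = 0} := by
  calc n - k = #{m : Fin n | (m : ℕ) < n - k} := by rw [Fin.card_filter_val_lt]; omega
    _ ≤ #{m | topShare n k m = 0} :=
      Finset.card_le_card fun m hm => by
        simp only [Finset.mem_filter, Finset.mem_univ, true_and] at hm ⊢
        exact if_pos hm

lemma sortedAsc_equalShare (b : Fin n → ℝ) (k : ℕ) : sortedAsc (equalShare b k) = topShare n k := by
  have hsorted : topShare n k ∘ Tuple.sort (topShare n k) = topShare n k := by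
    rw [Tuple.sort_eq_refl_iff_monotone.mpr (topShare_monotone n k)]
    rfl
  exact (Tuple.comp_perm_comp_sort_eq_comp_sort (σ := (Tuple.sort b).symm)).trans hsorted

lemma nthSmallest_le_of_le_sort_symm (b : Fin n → ℝ) {m : ℕ} {j : Fin n}
    (hj : m ≤ (Tuple.sort b).symm j) : nthSmallest b m ≤ b j := by
  have hm : m < n := hj.trans_lt ((Tuple.sort b).symm j).isLt
  have hbj : b j = sortedAsc b ((Tuple.sort b).symm j) := by simp [sortedAsc]
  rw [hbj, nthSmallest, dif_pos hm]
  exact Tuple.monotone_sort b hj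

lemma feasible_equalShare {b : Fin n → ℝ} (hb : ∀ j, 0 ≤ b j) {k : ℕ} (hk1 : 1 ≤ k)
    (hk2 : k ≤ n) : Feasible b k (k * nthSmallest b (n - k)) (equalShare b k) := by
  have hk : (0 : ℝ) < k := by exact_mod_cast hk1
  refine ⟨fun j => ?_, ?_, fun j => ?_, ?_⟩
  · simp only [equalShare, topShare, Function.comp_apply]
    split_ifs <;> positivity
  · exact (Equiv.sum_comp _ _).trans (sum_topShare hk1 hk2)
  · simp only [equalShare, topShare, Function.comp_apply]
    split_ifs with h
    · simpa using hb j
    · rw [← mul_assoc, inv_mul_cancel₀ hk.ne', one_mul]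
      exact nthSmallest_le_of_le_sort_symm b (not_lt.mp h)
  · refine (card_topShare_eq_zero n k).trans_eq ?_
    simp only [Finset.card_filter]
    exact (Equiv.sum_comp (Tuple.sort b).symm (fun m => if topShare n k m = 0 then 1 else 0)).symm

lemma sum_fin_val_add_one (k : ℕ) : ∑ i : Fin k, ((i : ℝ) + 1) = k * (k + 1) / 2 := by
  induction k with
  | zero => simp
  | succ m ih =>
    rw [Fin.sum_univ_castSucc]
    simp only [Fin.val_castSucc, Fin.val_last, ih]
    push_cast
    ring

lemma gini_const {k : ℕ} (hk : 1 ≤ k) {c : ℝ} (hc : c ≠ 0) : gini (fun _ : Fin k => c) = 0 := by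
  have hk' : (k : ℝ) ≠ 0 := by positivity
  rw [gini, ← Finset.sum_mul, sum_fin_val_add_one, Finset.sum_const, Finset.card_univ,
    Fintype.card_fin, nsmul_eq_mul]
  field_simp
  ring

lemma flexGini_equalShare (b : Fin n → ℝ) {k : ℕ} (hk1 : 1 ≤ k) (hk2 : k ≤ n) :
    flexGini k (equalShare b k) = 0 := by
  rw [flexGini, dif_pos hk2, sortedAsc_equalShare]
  have hshare : (fun i : Fin k => topShare n k ⟨n - k + i, by omega⟩) = fun _ => (k : ℝ)⁻¹ :=
    funext fun i => if_neg (by simp)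
  rw [hshare, gini_const hk1 (by positivity)]

end EqualShare

section MaxPrice

variable {n : ℕ}

lemma neg_two_le_gini {k : ℕ} {y : Fin k → ℝ} (hy : ∀ i, 0 ≤ y i) : -2 ≤ gini y := by
  have hweighted : 0 ≤ 2 * (∑ i : Fin k, ((i : ℝ) + 1) * y i) / (k * ∑ i, y i) := by
    have : 0 ≤ ∑ i, y i := Finset.sum_nonneg fun i _ => hy i
    have : 0 ≤ ∑ i : Fin k, ((i : ℝ) + 1) * y i :=
      Finset.sum_nonneg fun i _ => mul_nonneg (by positivity) (hy i)
    positivity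
  have hconst : ((k : ℝ) + 1) / k ≤ 2 := by
    rcases k.eq_zero_or_pos with rfl | hk
    · simp
    · rw [div_le_iff₀ (by exact_mod_cast hk)]
      linarith [(Nat.one_le_cast (α := ℝ)).mpr hk]
  rw [gini]
  linarith

lemma neg_two_le_flexGini (k : ℕ) {a : Fin n → ℝ} (ha : ∀ j, 0 ≤ a j) : -2 ≤ flexGini k a := by
  rw [flexGini]
  split_ifs
  · exact neg_two_le_gini fun _ => ha _
  · norm_num

lemma bddBelow_flexGini_feasible (b : Fin n → ℝ) (k : ℕ) (p : ℝ) :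
    BddBelow (flexGini k '' {a | Feasible b k p a}) := by
  refine ⟨-2, ?_⟩
  rintro _ ⟨a, ha, rfl⟩
  exact neg_two_le_flexGini k ha.1

lemma gStar_le_flexGini {b : Fin n → ℝ} {k : ℕ} {p : ℝ} {a : Fin n → ℝ}
    (ha : Feasible b k p a) : gStar b k p ≤ flexGini k a := by
  classical
  rw [gStar, if_pos ⟨a, ha⟩]
  exact csInf_le (bddBelow_flexGini_feasible b k p) ⟨a, ha, rfl⟩

lemma exists_feasible_of_gStar_lt_one {b : Fin n → ℝ} {k : ℕ} {p : ℝ} (h : gStar b k p < 1) :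
    ∃ a, Feasible b k p a := by
  classical
  by_contra hnone
  rw [gStar, if_neg hnone] at h
  exact lt_irrefl _ h

lemma Feasible.le_sum {b : Fin n → ℝ} {k : ℕ} {p : ℝ} {a : Fin n → ℝ}
    (ha : Feasible b k p a) : p ≤ ∑ j, b j :=
  calc p = (∑ j, a j) * p := by rw [ha.2.1, one_mul]
    _ = ∑ j, a j * p := Finset.sum_mul _ _ _
    _ ≤ ∑ j, b j := Finset.sum_le_sum fun j _ => ha.2.2.1 j

lemma Feasible.mul_price {b b' : Fin n → ℝ} {k : ℕ} {p c : ℝ} {a : Fin n → ℝ} (hc : 0 ≤ c)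
    (hbb' : ∀ j, c * b j ≤ b' j) (ha : Feasible b k p a) : Feasible b' k (c * p) a := by
  obtain ⟨hnonneg, hsum, hbudget, hzeros⟩ := ha
  refine ⟨hnonneg, hsum, fun j => ?_, hzeros⟩
  calc a j * (c * p) = c * (a j * p) := by ring
    _ ≤ c * b j := mul_le_mul_of_nonneg_left (hbudget j) hc
    _ ≤ b' j := hbb' j

lemma gStar_mul_le {b b' : Fin n → ℝ} {k : ℕ} {p c : ℝ} (hc : 0 ≤ c)
    (hbb' : ∀ j, c * b j ≤ b' j) (hfeas : ∃ a, Feasible b k p a) :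
    gStar b' k (c * p) ≤ gStar b k p := by
  classical
  obtain ⟨a, ha⟩ := hfeas
  rw [gStar, if_pos ⟨a, ha.mul_price hc hbb'⟩, gStar, if_pos ⟨a, ha⟩]
  refine csInf_le_csInf (bddBelow_flexGini_feasible b' k _) ⟨_, a, ha, rfl⟩ ?_
  exact Set.image_mono fun a' ha' => ha'.mul_price hc hbb'

lemma bddAbove_setOf_gStar_le {g : ℝ} (hg : g < 1) (b : Fin n → ℝ) (k : ℕ) :
    BddAbove {p : ℝ | 0 < p ∧ gStar b k p ≤ g} := by
  refine ⟨∑ j, b j, fun p hp => ?_⟩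
  obtain ⟨a, ha⟩ := exists_feasible_of_gStar_lt_one (hp.2.trans_lt hg)
  exact ha.le_sum

lemma pStar_nonneg (b : Fin n → ℝ) (k : ℕ) (g : ℝ) : 0 ≤ pStar b k g :=
  Real.sSup_nonneg fun _ hp => hp.1.le

/-- The price `k · nthSmallest b (n - k)` is admissible: at that price the `k` richest agents can
afford equal shares, whose Gini index is `0`. -/
lemma pStar_pos {b : Fin n → ℝ} (hb : ∀ j, 0 ≤ b j) {k : ℕ} (hk1 : 1 ≤ k) (hk2 : k ≤ n)
    (hm : 0 < nthSmallest b (n - k)) {g : ℝ} (hg0 : 0 ≤ g) (hg1 : g < 1) :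
    0 < pStar b k g := by
  have hp : (0 : ℝ) < k * nthSmallest b (n - k) := mul_pos (by exact_mod_cast hk1) hm
  have hgini := gStar_le_flexGini (feasible_equalShare hb hk1 hk2)
  rw [flexGini_equalShare b hk1 hk2] at hgini
  exact hp.trans_le (le_csSup (bddAbove_setOf_gStar_le hg1 b k) ⟨hp, hgini.trans hg0⟩)

lemma mul_pStar_le_pStar {b b' : Fin n → ℝ} {c : ℝ} (hc : 0 ≤ c) (hbb' : ∀ j, c * b j ≤ b' j)
    (k : ℕ) {g : ℝ} (hg : g < 1) : c * pStar b k g ≤ pStar b' k g := by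
  rcases hc.eq_or_lt with rfl | hc
  · simpa using pStar_nonneg b' k g
  rw [← le_div_iff₀' hc]
  refine Real.sSup_le (fun p ⟨hp, hpg⟩ => ?_) (div_nonneg (pStar_nonneg b' k g) hc.le)
  have hfeas := exists_feasible_of_gStar_lt_one (hpg.trans_lt hg)
  rw [le_div_iff₀' hc]
  exact le_csSup (bddAbove_setOf_gStar_le hg b' k)
    ⟨mul_pos hc hp, (gStar_mul_le hc.le hbb' hfeas).trans hpg⟩

lemma pStarK_eq_sup' (b : Fin n → ℝ) {K : Finset ℕ} (hK : K.Nonempty) (g : ℝ) :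
    pStarK b K g = K.sup' hK fun k => pStar b k g :=
  (Finset.sup'_eq_csSup_image K hK _).symm

end MaxPrice

lemma div_mul_update_le_update {n : ℕ} {b : Fin n → ℝ} (hb : ∀ j, 0 ≤ b j) (i : Fin n)
    {x y : ℝ} (hx : 0 ≤ x) (hxy : x ≤ y) (j : Fin n) :
    x / y * Function.update b i y j ≤ Function.update b i x j := by
  rcases eq_or_ne j i with rfl | hji
  · simp only [Function.update_self]
    rcases eq_or_ne y 0 with rfl | hy
    · simpa using hx
    · rw [div_mul_cancel₀ x hy]
  · simp only [Function.update_of_ne hji]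
    exact mul_le_of_le_one_left (hb j) (div_le_one_of_le₀ hxy (hx.trans hxy))

lemma mul_sup'_le_sup' {ι : Type*} {s : Finset ι} (hs : s.Nonempty) {f f' : ι → ℝ} {c : ℝ}
    (h : ∀ k ∈ s, c * f k ≤ f' k) : c * s.sup' hs f ≤ s.sup' hs f' := by
  obtain ⟨k, hk, hmax⟩ := s.exists_mem_eq_sup' hs f
  rw [hmax]
  exact (h k hk).trans (s.le_sup' f' hk)

lemma div_le_div_of_div_mul_le {x y P Q : ℝ} (hx : 0 ≤ x) (hxy : x ≤ y) (hQ : 0 < Q)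
    (h : x / y * Q ≤ P) : x / P ≤ y / Q := by
  rcases hx.eq_or_lt with rfl | hx
  · simpa using div_nonneg hxy hQ.le
  have hy := hx.trans_le hxy
  have hP : 0 < P := (by positivity : 0 < x / y * Q).trans_le h
  rw [div_mul_eq_mul_div, div_le_iff₀ hy] at h
  rw [div_le_div_iff₀ hP hQ]
  linarith

/-- The ratio `bᵢ / p*_k(bᵢ, b₋ᵢ)` is nondecreasing in `bᵢ` (on the domain
where `p*_k` is defined); consequently `bᵢ / p*(bᵢ, b₋ᵢ)` with `p*(b) = max_{k ∈ K} p*_k(b)`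
is also nondecreasing in `bᵢ`. -/
theorem budget_over_price_mono {n : ℕ} (g : ℝ) (hg : g ∈ Set.Ioo (0 : ℝ) 1)
    (b : Fin n → ℝ) (hnn : ∀ j, 0 ≤ b j) (i : Fin n) :
    (∀ k : ℕ, 1 ≤ k → k ≤ n → ∀ x y : ℝ, 0 ≤ x → x ≤ y →
      0 < nthSmallest (Function.update b i x) (n - k) →
      0 < nthSmallest (Function.update b i y) (n - k) →
      x / pStar (Function.update b i x) k g ≤ y / pStar (Function.update b i y) k g) ∧
      ∀ K : Finset ℕ, K.Nonempty → (∀ k ∈ K, 1 ≤ k ∧ k ≤ n) → ∀ x y : ℝ, 0 ≤ x → x ≤ y →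
        (∀ k ∈ K, 0 < nthSmallest (Function.update b i x) (n - k)) →
        (∀ k ∈ K, 0 < nthSmallest (Function.update b i y) (n - k)) →
        x / pStarK (Function.update b i x) K g ≤ y / pStarK (Function.update b i y) K g := by
  obtain ⟨hg0, hg1⟩ := hg
  have hnn_update : ∀ y, 0 ≤ y → ∀ j, 0 ≤ Function.update b i y j :=
    fun y hy => le_update_iff.2 ⟨hy, fun j _ => hnn j⟩
  have hscale : ∀ k x y, 0 ≤ x → x ≤ y →
      x / y * pStar (Function.update b i y) k g ≤ pStar (Function.update b i x) k g :=
    fun k x y hx hxy => mul_pStar_le_pStar (div_nonneg hx (hx.trans hxy))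
      (div_mul_update_le_update hnn i hx hxy) k hg1
  have hpos : ∀ k y, 0 ≤ y → 1 ≤ k → k ≤ n → 0 < nthSmallest (Function.update b i y) (n - k) →
      0 < pStar (Function.update b i y) k g :=
    fun k y hy hk1 hk2 hm => pStar_pos (hnn_update y hy) hk1 hk2 hm hg0.le hg1
  refine ⟨fun k hk1 hk2 x y hx hxy _ hmy => ?_, fun K hK hKn x y hx hxy _ hmy => ?_⟩
  · exact div_le_div_of_div_mul_le hx hxy (hpos k y (hx.trans hxy) hk1 hk2 hmy)
      (hscale k x y hx hxy)
  · obtain ⟨k, hk⟩ := hK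
    rw [pStarK_eq_sup' _ ⟨k, hk⟩, pStarK_eq_sup' _ ⟨k, hk⟩]
    refine div_le_div_of_div_mul_le hx hxy ?_ (mul_sup'_le_sup' _ fun k _ => hscale k x y hx hxy)
    exact (hpos k y (hx.trans hxy) (hKn k hk).1 (hKn k hk).2 (hmy k hk)).trans_le
      (K.le_sup' (fun k => pStar (Function.update b i y) k g) hk)
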